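/- arXiv:1011.0472 — 2 statements merged into one kernel-verified Lean document; each statement's English description precedes it below -/
import Mathlib

section
/- Let s be a continuous linear functional on E, let α_1,…,α_k ≥ 0, and let x_1,…,x_k ∈ E. Define q(x) := s(x) + Σ_{i=1}^k α_i Δ(x, x_i). If x* is a minimizer of q over all of E, then for every x ∈ E, q(x) = (Σ_{i=1}^k α_i) Δ(x, x*) + q(x*). -/
noncomputable section

open scoped BigOperators

/-- Bregman divergence induced by `d`. -/
def breg {E : Type*} [NormedAddCommGroup E] [NormedSpace ℝ E]
    (d : E → ℝ) (x y : E) : ℝ :=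
  d x - d y - fderiv ℝ d y (x - y)

/-- `d` is `σ`-strongly convex with respect to the norm `‖·‖`. -/
def StrongConvexOnNorm {E : Type*} [NormedAddCommGroup E] [NormedSpace ℝ E]
    (σ : ℝ) (d : E → ℝ) : Prop :=
  ∀ x y : E, d x ≥ d y + fderiv ℝ d y (x - y) + σ / 2 * ‖x - y‖ ^ 2

/-- `g` is a subgradient of the extended-real-valued function `h` at `y`. -/
def IsSubgradE {E : Type*} [NormedAddCommGroup E] [NormedSpace ℝ E]
    (h : E → EReal) (y : E) (g : E →L[ℝ] ℝ) : Prop :=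
  ∀ x, h x ≥ h y + ((g (x - y) : ℝ) : EReal)

/-- `h` is `lam`-strongly convex with respect to `d` (extended-real-valued version). -/
def ScWrtE {E : Type*} [NormedAddCommGroup E] [NormedSpace ℝ E]
    (d : E → ℝ) (lam : ℝ) (h : E → EReal) : Prop :=
  ∀ y : E, h y ≠ ⊤ → ∀ g : E →L[ℝ] ℝ, IsSubgradE h y g →
    ∀ x, h x ≥ h y + ((g (x - y) + lam * breg d x y : ℝ) : EReal)

/-- `f` is `lam`-strongly convex with respect to `d` (real-valued version). -/
def ScWrtR {E : Type*} [NormedAddCommGroup E] [NormedSpace ℝ E]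
    (d : E → ℝ) (lam : ℝ) (f : E → ℝ) : Prop :=
  ∀ y : E, ∀ g : E →L[ℝ] ℝ, (∀ x, f x ≥ f y + g (x - y)) →
    ∀ x, f x ≥ f y + g (x - y) + lam * breg d x y

/-- Convexity for extended-real-valued functions. -/
def ConvexE {E : Type*} [NormedAddCommGroup E] [NormedSpace ℝ E]
    (h : E → EReal) : Prop :=
  ∀ x y : E, ∀ a b : ℝ, 0 ≤ a → 0 ≤ b → a + b = 1 →
    h (a • x + b • y) ≤ ((a : ℝ) : EReal) * h x + ((b : ℝ) : EReal) * h y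

/-- The lower model `ℓ_f(x; y, lam1)`. -/
def ellf {E : Type*} [NormedAddCommGroup E] [NormedSpace ℝ E]
    (d : E → ℝ) (f : E → ℝ) (lam1 : ℝ) (x y : E) : ℝ :=
  f y + fderiv ℝ f y (x - y) + lam1 * breg d x y

/-!
The first-order condition at the minimizer `x*` says that the linear functional
`s + Σ αᵢ (Dd(x*) - Dd(xᵢ))` vanishes. On the other hand, by the three-point identity
`Δ(x, xᵢ) = Δ(x, x*) + Δ(x*, xᵢ) + (Dd(x*) - Dd(xᵢ))(x - x*)`, the difference
`q(x) - q(x*) - (Σ αᵢ) Δ(x, x*)` is exactly that functional evaluated at `x - x*`.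
-/

section BregmanModel

variable {E : Type*} [NormedAddCommGroup E] [NormedSpace ℝ E] {ι : Type*} [Fintype ι]

theorem breg_eq_add_add_fderiv_sub (d : E → ℝ) (x y z : E) :
    breg d x z = breg d x y + breg d y z + (fderiv ℝ d y - fderiv ℝ d z) (x - y) := by
  simp only [breg, sub_apply, map_sub]
  ring

theorem hasFDerivAt_breg_left {d : E → ℝ} {y : E} (hd : DifferentiableAt ℝ d y) (z : E) :
    HasFDerivAt (fun x => breg d x z) (fderiv ℝ d y - fderiv ℝ d z) y := by
  have hlin : HasFDerivAt (fun x => fderiv ℝ d z (x - z)) (fderiv ℝ d z) y := by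
    simpa only [map_sub] using (fderiv ℝ d z).hasFDerivAt.sub_const (fderiv ℝ d z z)
  exact (hd.hasFDerivAt.sub_const (d z)).sub hlin

theorem hasFDerivAt_add_sum_mul_breg {d : E → ℝ} {y : E} (hd : DifferentiableAt ℝ d y)
    (s : E →L[ℝ] ℝ) (α : ι → ℝ) (xs : ι → E) :
    HasFDerivAt (fun x => s x + ∑ i, α i * breg d x (xs i))
      (s + ∑ i, α i • (fderiv ℝ d y - fderiv ℝ d (xs i))) y :=
  s.hasFDerivAt.add <| HasFDerivAt.fun_sum fun i _ =>
    (hasFDerivAt_breg_left hd (xs i)).const_mul (α i)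

theorem add_sum_mul_breg_eq (d : E → ℝ) (s : E →L[ℝ] ℝ) (α : ι → ℝ) (xs : ι → E) (x y : E) :
    s x + ∑ i, α i * breg d x (xs i) =
      (∑ i, α i) * breg d x y + (s y + ∑ i, α i * breg d y (xs i)) +
        (s + ∑ i, α i • (fderiv ℝ d y - fderiv ℝ d (xs i))) (x - y) := by
  rw [Finset.sum_congr rfl fun i _ => by rw [breg_eq_add_add_fderiv_sub d x y (xs i)]]
  simp only [add_apply, sum_apply, smul_apply, smul_eq_mul, Finset.sum_mul, mul_add,
    Finset.sum_add_distrib, map_sub s]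
  ring

theorem add_sum_mul_breg_eq_of_isLocalMin {d : E → ℝ} {y : E} (hd : DifferentiableAt ℝ d y)
    (s : E →L[ℝ] ℝ) (α : ι → ℝ) (xs : ι → E)
    (hmin : IsLocalMin (fun x => s x + ∑ i, α i * breg d x (xs i)) y) (x : E) :
    s x + ∑ i, α i * breg d x (xs i) =
      (∑ i, α i) * breg d x y + (s y + ∑ i, α i * breg d y (xs i)) := by
  rw [add_sum_mul_breg_eq d s α xs x y,
    hmin.hasFDerivAt_eq_zero (hasFDerivAt_add_sum_mul_breg hd s α xs)]
  simp

end BregmanModel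

theorem stmt4_general {E : Type*} [NormedAddCommGroup E] [NormedSpace ℝ E]
    (d : E → ℝ) (hddiff : Differentiable ℝ d)
    (s : E →L[ℝ] ℝ) (k : ℕ) (α : Fin k → ℝ) (xs : Fin k → E)
    (xstar : E)
    (hmin : ∀ x : E, s xstar + ∑ i, α i * breg d xstar (xs i) ≤
      s x + ∑ i, α i * breg d x (xs i)) :
    ∀ x : E, s x + ∑ i, α i * breg d x (xs i) =
      (∑ i, α i) * breg d x xstar + (s xstar + ∑ i, α i * breg d xstar (xs i)) :=
  add_sum_mul_breg_eq_of_isLocalMin (hddiff xstar) s α xs (Filter.Eventually.of_forall hmin)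

/-- if `x*` is an unconstrained minimizer of
`q(x) = s(x) + Σ αᵢ Δ(x, xᵢ)`, then `q(x) = (Σ αᵢ) Δ(x, x*) + q(x*)` for all `x`. -/
theorem stmt4 {E : Type*} [NormedAddCommGroup E] [NormedSpace ℝ E] [FiniteDimensional ℝ E]
    (σ : ℝ) (hσ : 0 < σ)
    (d : E → ℝ) (hddiff : Differentiable ℝ d) (hdconv : ConvexOn ℝ Set.univ d)
    (hdsc : StrongConvexOnNorm σ d)
    (s : E →L[ℝ] ℝ) (k : ℕ) (α : Fin k → ℝ) (hα : ∀ i, 0 ≤ α i) (xs : Fin k → E)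
    (xstar : E)
    (hmin : ∀ x : E, s xstar + ∑ i, α i * breg d xstar (xs i) ≤
      s x + ∑ i, α i * breg d x (xs i)) :
    ∀ x : E, s x + ∑ i, α i * breg d x (xs i) =
      (∑ i, α i) * breg d x xstar + (s xstar + ∑ i, α i * breg d xstar (xs i)) :=
  stmt4_general d hddiff s k α xs xstar hmin
end
end

section
/- Consider the sequences produced by Algorithm AGM-EF-1 (as specified in the context). Then for every k ≥ 0 and every x ∈ dom Ψ, q_{k+1}(x) − J(x) ≤ (1 − a_{k+1}) (q_k(x) − J(x)). -/
noncomputable section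

open scoped BigOperators

/-!
Every `q_k` and `ψ_k` has the form `α d + A + C + β Ψ` with `A` linear and `β ≥ 0`; its modulus
of strong convexity with respect to `d` is `α + β λ₂`, and this modulus obeys the same recursion
as `c_k`. At a minimiser `z` of such a function (with `β > 0`), the first-order condition makes
`-(α Dd(z) + A) / β` a subgradient of `Ψ`, so the strong convexity of `Ψ` gives
`ψ_{k+1}(w) ≥ ψ_{k+1}(z_{k+1}) + c_{k+1} Δ(w, z_{k+1}) = q_{k+1}(w)`. Since
`ℓ_f(·; u_{k+1}, λ₁) ≤ f`, the definition of `ψ_{k+1}` then yields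
`q_{k+1} ≤ (1 - a_{k+1}) q_k + a_{k+1} J`.
-/

open Filter Topology Set

lemma EReal.sub_coe_le_one_sub_mul {x : EReal} {a Q m J : ℝ} (ha : 0 ≤ a) (hm : m ≤ J)
    (hx : x ≤ ((1 - a) * Q + a * m : ℝ)) : x - J ≤ ((1 - a : ℝ) : EReal) * (Q - J) := by
  calc x - J ≤ ((1 - a) * Q + a * m - J : ℝ) := by exact_mod_cast EReal.sub_le_sub hx le_rfl
    _ ≤ ((1 - a) * (Q - J) : ℝ) := by gcongr; linarith [mul_le_mul_of_nonneg_left hm ha]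
    _ = _ := by norm_cast

section

variable {E : Type*} [NormedAddCommGroup E] [NormedSpace ℝ E]

lemma ConvexOn.add_fderiv_sub_le {f : E → ℝ} (hconv : ConvexOn ℝ univ f) {y : E}
    (hf : DifferentiableAt ℝ f y) (x : E) : f y + fderiv ℝ f y (x - y) ≤ f x := by
  have hslope : ∀ t ∈ Ioo (0 : ℝ) 1, t⁻¹ • (f (y + t • (x - y)) - f y) ≤ f x - f y := by
    rintro t ⟨ht0, ht1⟩
    have h := hconv.2 (mem_univ x) (mem_univ y) ht0.le (sub_nonneg.2 ht1.le) (add_sub_cancel t 1)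
    rw [show t • x + (1 - t) • y = y + t • (x - y) by module, smul_eq_mul, smul_eq_mul] at h
    rw [smul_eq_mul, inv_mul_le_iff₀ ht0]
    linarith
  have := le_of_tendsto (hf.hasFDerivAt.hasLineDerivAt (x - y)).tendsto_slope_zero_right
    (eventually_of_mem (Ioo_mem_nhdsGT one_pos) hslope)
  linarith

lemma ScWrtR.ellf_le {d f : E → ℝ} {lam : ℝ} (hsc : ScWrtR d lam f)
    (hconv : ConvexOn ℝ univ f) (hdiff : Differentiable ℝ f) (x y : E) :
    ellf d f lam x y ≤ f x :=
  hsc y _ (hconv.add_fderiv_sub_le (hdiff y)) x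

lemma ConvexE.isSubgradE_of_isMinOn_add {Ψ : E → EReal} (hΨ : ConvexE Ψ) (hbot : ∀ x, Ψ x ≠ ⊥)
    {φ : E → ℝ} {β : ℝ} {z : E} (hβ : 0 < β) (hφ : DifferentiableAt ℝ φ z) (hz : Ψ z ≠ ⊤)
    (hmin : ∀ w, (φ z : EReal) + β * Ψ z ≤ φ w + β * Ψ w) :
    IsSubgradE Ψ z (-β⁻¹ • fderiv ℝ φ z) := by
  intro x
  by_cases hx : Ψ x = ⊤
  · simp [hx]
  lift Ψ z to ℝ using ⟨hz, hbot z⟩ with Z hZ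
  lift Ψ x to ℝ using ⟨hx, hbot x⟩ with X hX
  have hslope : ∀ t ∈ Ioo (0 : ℝ) 1, β * (Z - X) ≤ t⁻¹ • (φ (z + t • (x - z)) - φ z) := by
    rintro t ⟨ht0, ht1⟩
    set zt := z + t • (x - z)
    have hconvt : Ψ zt ≤ (((1 - t) * Z + t * X : ℝ) : EReal) := by
      have h := hΨ z x (1 - t) t (sub_nonneg.2 ht1.le) ht0.le (sub_add_cancel 1 t)
      rwa [show (1 - t) • z + t • x = zt by module, ← hZ, ← hX] at h
    lift Ψ zt to ℝ using ⟨ne_top_of_le_ne_top (EReal.coe_ne_top _) hconvt, hbot zt⟩ with P hP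
    have hPle : P ≤ (1 - t) * Z + t * X := EReal.coe_le_coe_iff.1 hconvt
    have hmint : φ z + β * Z ≤ φ zt + β * P := by
      have h := hmin zt
      rw [← hP] at h
      exact_mod_cast h
    rw [smul_eq_mul, le_inv_mul_iff₀ ht0]
    nlinarith
  have := ge_of_tendsto (hφ.hasFDerivAt.hasLineDerivAt (x - z)).tendsto_slope_zero_right
    (eventually_of_mem (Ioo_mem_nhdsGT one_pos) hslope)
  have hZX : Z - X ≤ β⁻¹ * fderiv ℝ φ z (x - z) := by
    rw [le_inv_mul_iff₀ hβ]
    exact this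
  have hreal : Z + (-β⁻¹ • fderiv ℝ φ z) (x - z) ≤ X := by
    rw [smul_apply, smul_eq_mul, neg_mul]
    linarith
  exact_mod_cast hreal

lemma ScWrtE.add_breg_le_of_isMinOn_add {d : E → ℝ} {lam : ℝ} {Ψ : E → EReal}
    (hsc : ScWrtE d lam Ψ) (hΨ : ConvexE Ψ) (hbot : ∀ x, Ψ x ≠ ⊥)
    {φ : E → ℝ} {β : ℝ} {z : E} (hβ : 0 < β) (hφ : DifferentiableAt ℝ φ z) (hz : Ψ z ≠ ⊤)
    (hmin : ∀ w, (φ z : EReal) + β * Ψ z ≤ φ w + β * Ψ w) (w : E) :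
    (φ z : EReal) + β * Ψ z + ((breg φ w z + β * lam * breg d w z : ℝ) : EReal)
      ≤ φ w + β * Ψ w := by
  have hs := hsc z hz _ (hΨ.isSubgradE_of_isMinOn_add hbot hβ hφ hz hmin) w
  by_cases hw : Ψ w = ⊤
  · simp [hw, EReal.coe_mul_top_of_pos hβ, EReal.add_top_of_ne_bot]
  lift Ψ z to ℝ using ⟨hz, hbot z⟩ with Z hZ
  lift Ψ w to ℝ using ⟨hw, hbot w⟩ with W hW
  have hsr : Z + ((-β⁻¹ • fderiv ℝ φ z) (w - z) + lam * breg d w z) ≤ W := by exact_mod_cast hs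
  rw [smul_apply, smul_eq_mul] at hsr
  have hβs : β * (Z - β⁻¹ * fderiv ℝ φ z (w - z) + lam * breg d w z) ≤ β * W := by
    gcongr
    linarith
  rw [mul_add, mul_sub, ← mul_assoc, mul_inv_cancel₀ hβ.ne', one_mul] at hβs
  have hreal : φ z + β * Z + (breg φ w z + β * lam * breg d w z) ≤ φ w + β * W := by
    have hφbreg : breg φ w z = φ w - φ z - fderiv ℝ φ z (w - z) := rfl
    linarith
  exact_mod_cast hreal

def IsModelForm (d : E → ℝ) (Ψ : E → EReal) (α β : ℝ) (h : E → EReal) : Prop :=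
  ∃ (A : E →L[ℝ] ℝ) (C : ℝ), ∀ w, h w = ((α * d w + A w + C : ℝ) : EReal) + (β : EReal) * Ψ w

variable {d : E → ℝ} {Ψ : E → EReal}

lemma isModelForm_ellf_add (f : E → ℝ) (lam : ℝ) (y : E) :
    IsModelForm d Ψ lam 1 (fun w ↦ (ellf d f lam w y : EReal) + Ψ w) := by
  refine ⟨fderiv ℝ f y - lam • fderiv ℝ d y,
    f y - fderiv ℝ f y y - lam * (d y - fderiv ℝ d y y), fun w ↦ ?_⟩
  dsimp only
  rw [EReal.coe_one, one_mul]
  congr 1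
  norm_cast
  simp only [ellf, breg, sub_apply, smul_apply, smul_eq_mul, map_sub]
  ring

lemma isModelForm_mul_breg_add (c M : ℝ) (z : E) :
    IsModelForm d Ψ c 0 (fun w ↦ ((c * breg d w z : ℝ) : EReal) + M) := by
  refine ⟨-c • fderiv ℝ d z, M - c * (d z - fderiv ℝ d z z), fun w ↦ ?_⟩
  dsimp only
  rw [EReal.coe_zero, zero_mul, add_zero]
  norm_cast
  simp only [breg, smul_apply, smul_eq_mul, map_sub]
  ring

namespace IsModelForm

variable {α β : ℝ} {h : E → EReal}

lemma add {α' β' : ℝ} {h' : E → EReal} (hh : IsModelForm d Ψ α β h)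
    (hh' : IsModelForm d Ψ α' β' h') (hβ : 0 ≤ β) (hβ' : 0 ≤ β') :
    IsModelForm d Ψ (α + α') (β + β') (fun w ↦ h w + h' w) := by
  obtain ⟨A, C, hA⟩ := hh
  obtain ⟨A', C', hA'⟩ := hh'
  refine ⟨A + A', C + C', fun w ↦ ?_⟩
  dsimp only
  rw [hA, hA', EReal.coe_add β, EReal.right_distrib_of_nonneg (EReal.coe_nonneg.2 hβ)
    (EReal.coe_nonneg.2 hβ'), add_add_add_comm]
  congr 1
  norm_cast
  simp only [add_apply]
  ring

lemma const_mul {s : ℝ} (hh : IsModelForm d Ψ α β h) (hs : 0 ≤ s) :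
    IsModelForm d Ψ (s * α) (s * β) (fun w ↦ (s : EReal) * h w) := by
  obtain ⟨A, C, hA⟩ := hh
  refine ⟨s • A, s * C, fun w ↦ ?_⟩
  dsimp only
  rw [hA, EReal.left_distrib_of_nonneg_of_ne_top (EReal.coe_nonneg.2 hs) (EReal.coe_ne_top s),
    ← mul_assoc, ← EReal.coe_mul]
  congr 1
  norm_cast
  simp only [smul_apply, smul_eq_mul]
  ring

lemma ne_top (hh : IsModelForm d Ψ α β h) {w : E} (hw : Ψ w ≠ ⊤) (hw' : Ψ w ≠ ⊥) :
    h w ≠ ⊤ := by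
  obtain ⟨A, C, hA⟩ := hh
  lift Ψ w to ℝ using ⟨hw, hw'⟩ with W hW
  rw [hA, ← hW]
  exact_mod_cast EReal.coe_ne_top _

lemma ne_bot (hh : IsModelForm d Ψ α β h) (hβ : 0 ≤ β) {w : E} (hw : Ψ w ≠ ⊥) : h w ≠ ⊥ := by
  obtain ⟨A, C, hA⟩ := hh
  rw [hA, EReal.add_ne_bot_iff, EReal.mul_ne_bot]
  exact ⟨EReal.coe_ne_bot _, .inl (EReal.coe_ne_bot _), .inr hw, .inl (EReal.coe_ne_top _),
    .inl (EReal.coe_nonneg.2 hβ)⟩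

lemma add_breg_le_of_isMinOn {lam : ℝ} (hh : IsModelForm d Ψ α β h) (hβ : 0 < β)
    (hd : Differentiable ℝ d) (hsc : ScWrtE d lam Ψ) (hΨ : ConvexE Ψ) (hbot : ∀ x, Ψ x ≠ ⊥)
    {z : E} (hmin : ∀ w, h z ≤ h w) (hz : h z ≠ ⊤) (w : E) :
    h z + (((α + β * lam) * breg d w z : ℝ) : EReal) ≤ h w := by
  obtain ⟨A, C, hA⟩ := hh
  set φ : E → ℝ := fun w ↦ α * d w + A w + C
  have hφ : HasFDerivAt φ (α • fderiv ℝ d z + A) z :=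
    (((hd z).hasFDerivAt.const_mul α).add A.hasFDerivAt).add_const C
  have hφbreg : breg φ w z = α * breg d w z := by
    simp only [breg, hφ.fderiv, φ, add_apply, smul_apply, smul_eq_mul, map_sub]
    ring
  have hΨz : Ψ z ≠ ⊤ := by
    intro hΨz
    rw [hA, hΨz, EReal.coe_mul_top_of_pos hβ, EReal.add_top_of_ne_bot (EReal.coe_ne_bot _)] at hz
    exact hz rfl
  have key := hsc.add_breg_le_of_isMinOn_add hΨ hbot hβ hφ.differentiableAt hΨz
    (fun w ↦ by simpa only [hA] using hmin w) w
  rw [hA, hA]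
  convert key using 2
  rw [hφbreg]
  congr 1
  ring

lemma exists_coe_and_add_breg_le {lam1 lam2 α β a : ℝ} {f : E → ℝ} {u z w₀ : E}
    {q ψ : E → EReal} (hd : Differentiable ℝ d) (hsc : ScWrtE d lam2 Ψ) (hΨ : ConvexE Ψ)
    (hbot : ∀ x, Ψ x ≠ ⊥) (hw₀ : Ψ w₀ ≠ ⊤) (hq : IsModelForm d Ψ α β q) (hβ : 0 ≤ β)
    (ha : a ∈ Ioo (0 : ℝ) 1)
    (hψ : ∀ w, ψ w =
      ((1 - a : ℝ) : EReal) * q w + (a : EReal) * ((ellf d f lam1 w u : EReal) + Ψ w))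
    (hz : ∀ w, ψ z ≤ ψ w) :
    ∃ M : ℝ, ψ z = M ∧ ∀ w,
      ((((1 - a) * (α + β * lam2) + a * (lam1 + lam2)) * breg d w z : ℝ) : EReal) + M ≤ ψ w := by
  obtain ⟨ha0, ha1⟩ := ha
  have hβ' : 0 < (1 - a) * β + a := by nlinarith
  have hform : IsModelForm d Ψ ((1 - a) * α + a * lam1) ((1 - a) * β + a) ψ := by
    have := (hq.const_mul (sub_nonneg.2 ha1.le)).add
      ((isModelForm_ellf_add f lam1 u).const_mul ha0.le) (mul_nonneg (sub_nonneg.2 ha1.le) hβ)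
      (by simpa using ha0.le)
    rwa [mul_one, ← funext hψ] at this
  have hzT : ψ z ≠ ⊤ := ne_top_of_le_ne_top (hform.ne_top hw₀ (hbot w₀)) (hz w₀)
  have key := hform.add_breg_le_of_isMinOn hβ' hd hsc hΨ hbot hz hzT
  lift ψ z to ℝ using ⟨hzT, hform.ne_bot hβ'.le (hbot z)⟩ with M
  refine ⟨M, rfl, fun w ↦ ?_⟩
  rw [add_comm]
  convert key w using 4
  ring

end IsModelForm

end

theorem stmt12_general {E : Type*} [NormedAddCommGroup E] [NormedSpace ℝ E]
    (σ lam1 lam2 L : ℝ)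
    (d : E → ℝ) (hddiff : Differentiable ℝ d)
    (Ψ : E → EReal) (hΨbot : ∀ x, Ψ x ≠ ⊥) (hΨprop : ∃ x, Ψ x ≠ ⊤)
    (hΨconv : ConvexE Ψ) (hΨsc : ScWrtE d lam2 Ψ)
    (f : E → ℝ) (hfconv : ConvexOn ℝ Set.univ f) (hfdiff : Differentiable ℝ f)
    (hfsc : ScWrtR d lam1 f)
    -- Algorithm AGM-EF-1
    (x z u : ℕ → E) (a c : ℕ → ℝ) (ψ q : ℕ → E → EReal)
    (hc0 : c 0 = L / σ + lam2)
    (hq0 : ∀ w, q 0 w =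
      ((L / σ * breg d w (u 0) + f (u 0) + fderiv ℝ f (u 0) (w - u 0) : ℝ) : EReal) + Ψ w)
    (hamem : ∀ k, a (k + 1) ∈ Set.Ioo (0 : ℝ) 1)
    (hc : ∀ k, c (k + 1) = (1 - a (k + 1)) * c k + (lam1 + lam2) * a (k + 1))
    (hψ : ∀ k w, ψ (k + 1) w =
      ((1 - a (k + 1) : ℝ) : EReal) * q k w
        + ((a (k + 1) : ℝ) : EReal) * (((ellf d f lam1 w (u (k + 1)) : ℝ) : EReal) + Ψ w))
    (hz : ∀ k w, ψ (k + 1) (z (k + 1)) ≤ ψ (k + 1) w)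
    (hq : ∀ k w, q (k + 1) w =
      ((c (k + 1) * breg d w (z (k + 1)) : ℝ) : EReal) + ψ (k + 1) (z (k + 1)))
    :
    ∀ k : ℕ, ∀ w : E, Ψ w ≠ ⊤ →
      q (k + 1) w - (((f w : ℝ) : EReal) + Ψ w) ≤
        ((1 - a (k + 1) : ℝ) : EReal) * (q k w - (((f w : ℝ) : EReal) + Ψ w)) := by
  obtain ⟨w₀, hw₀⟩ := hΨprop
  have hstep k {α β} (hβ : 0 ≤ β) (hqk : IsModelForm d Ψ α β (q k)) :=
    hqk.exists_coe_and_add_breg_le (f := f) (u := u (k + 1)) hddiff hΨsc hΨconv hΨbot hw₀ hβ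
      (hamem k) (hψ k) (hz k)
  have hmodel : ∀ k, ∃ α β, 0 ≤ β ∧ α + β * lam2 = c k ∧ IsModelForm d Ψ α β (q k) := by
    intro k
    induction k with
    | zero =>
      refine ⟨L / σ, 1, zero_le_one, by rw [hc0, one_mul], ?_⟩
      convert isModelForm_ellf_add f (L / σ) (u 0) using 1
      funext w
      rw [hq0, ellf]
      congr 2
      ring
    | succ k ih =>
      obtain ⟨α, β, hβ, -, hqk⟩ := ih
      obtain ⟨M, hM, -⟩ := hstep k hβ hqk
      refine ⟨c (k + 1), 0, le_rfl, by ring, ?_⟩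
      rw [funext (hq k), hM]
      exact isModelForm_mul_breg_add _ _ _
  intro k w hw
  obtain ⟨α, β, hβ, hck, hqk⟩ := hmodel k
  obtain ⟨M, hM, hdesc⟩ := hstep k hβ hqk
  have hqψ : q (k + 1) w ≤ ψ (k + 1) w := by
    rw [hq k w, hM, hc k, ← hck]
    convert hdesc w using 4
    ring
  have hℓ := hfsc.ellf_le hfconv hfdiff w (u (k + 1))
  obtain ⟨ha0, -⟩ := hamem k
  lift q k w to ℝ using ⟨hqk.ne_top hw (hΨbot w), hqk.ne_bot hβ (hΨbot w)⟩ with Q hQ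
  lift Ψ w to ℝ using ⟨hw, hΨbot w⟩ with W hW
  rw [hψ k w, ← hQ, ← hW] at hqψ
  rw [← EReal.coe_add]
  exact EReal.sub_coe_le_one_sub_mul ha0.le (add_le_add_left hℓ W) (by exact_mod_cast hqψ)

/-- geometric decay of the model gap in AGM-EF-1. -/
theorem stmt12 {E : Type*} [NormedAddCommGroup E] [NormedSpace ℝ E] [FiniteDimensional ℝ E]
    (σ lam1 lam2 L : ℝ) (hσ : 0 < σ) (hlam1 : 0 ≤ lam1) (hlam2 : 0 ≤ lam2)
    (hL : σ * lam1 < L)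
    (d : E → ℝ) (hddiff : Differentiable ℝ d) (hdconv : ConvexOn ℝ Set.univ d)
    (hdsc : StrongConvexOnNorm σ d)
    (Ψ : E → EReal) (hΨbot : ∀ x, Ψ x ≠ ⊥) (hΨprop : ∃ x, Ψ x ≠ ⊤)
    (hΨlsc : LowerSemicontinuous Ψ) (hΨconv : ConvexE Ψ) (hΨsc : ScWrtE d lam2 Ψ)
    (f : E → ℝ) (hfconv : ConvexOn ℝ Set.univ f) (hfdiff : Differentiable ℝ f)
    (hfsc : ScWrtR d lam1 f)
    (hfL : ∀ x y : E, ‖fderiv ℝ f x - fderiv ℝ f y‖ ≤ L * ‖x - y‖)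
    -- Algorithm AGM-EF-1
    (x z u : ℕ → E) (a c : ℕ → ℝ) (ψ q : ℕ → E → EReal)
    (hu0 : Ψ (u 0) ≠ ⊤) (hc0 : c 0 = L / σ + lam2)
    (hq0 : ∀ w, q 0 w =
      ((L / σ * breg d w (u 0) + f (u 0) + fderiv ℝ f (u 0) (w - u 0) : ℝ) : EReal) + Ψ w)
    (hx0 : x 0 = z 0) (hz0min : ∀ w, q 0 (z 0) ≤ q 0 w)
    (hamem : ∀ k, a (k + 1) ∈ Set.Ioo (0 : ℝ) 1)
    (haroot : ∀ k, σ * (1 - a (k + 1)) * (c k + lam2 * a (k + 1)) + σ * lam1 * a (k + 1)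
        = L * a (k + 1) ^ 2)
    (hc : ∀ k, c (k + 1) = (1 - a (k + 1)) * c k + (lam1 + lam2) * a (k + 1))
    (hu : ∀ k,
      u (k + 1) =
        ((((1 - a (k + 1)) * c k + lam1 * a (k + 1) + lam2 * a (k + 1) * (1 - a (k + 1)))
            - lam1 * a (k + 1) * a (k + 1))⁻¹) •
          (((((1 - a (k + 1)) * c k + lam1 * a (k + 1) + lam2 * a (k + 1) * (1 - a (k + 1)))
                - ((1 - a (k + 1)) * c k + lam1 * a (k + 1)) * a (k + 1)) • x k)
            + (((1 - a (k + 1)) * c k * a (k + 1)) • z k)))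
    (hψ : ∀ k w, ψ (k + 1) w =
      ((1 - a (k + 1) : ℝ) : EReal) * q k w
        + ((a (k + 1) : ℝ) : EReal) * (((ellf d f lam1 w (u (k + 1)) : ℝ) : EReal) + Ψ w))
    (hz : ∀ k w, ψ (k + 1) (z (k + 1)) ≤ ψ (k + 1) w)
    (hx : ∀ k, x (k + 1) = (1 - a (k + 1)) • x k + a (k + 1) • z (k + 1))
    (hq : ∀ k w, q (k + 1) w =
      ((c (k + 1) * breg d w (z (k + 1)) : ℝ) : EReal) + ψ (k + 1) (z (k + 1)))
    :
    ∀ k : ℕ, ∀ w : E, Ψ w ≠ ⊤ →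
      q (k + 1) w - (((f w : ℝ) : EReal) + Ψ w) ≤
        ((1 - a (k + 1) : ℝ) : EReal) * (q k w - (((f w : ℝ) : EReal) + Ψ w)) :=
  stmt12_general σ lam1 lam2 L d hddiff Ψ hΨbot hΨprop hΨconv hΨsc f hfconv hfdiff hfsc x z u a c ψ
    q hc0 hq0 hamem hc hψ hz hq
end
end
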